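/- Let A, B, C, D ≥ 0 with S = A + B + C + D > 0, and consider the amplification factor of the lexicographic Gauss-Seidel smoother, μ(α₁, α₂) = |A e^{iα₁} + C e^{iα₂}| / |B e^{-iα₁} + D e^{-iα₂} - S|, for (α₁, α₂) with the denominator nonzero. Then |A e^{iα₁} + C e^{iα₂}| ≤ A + C and |B e^{-iα₁} + D e^{-iα₂} - S| ≥ S - B - D = A + C, with equality in the second only when cos α₁ = 1 (if B > 0) and cos α₂ = 1 (if D > 0); hence μ ≤ 1 always, and μ(α₁, α₂) < 1 whenever (α₁, α₂) lies in the high-frequency range [-π,π)² \ [-π/2,π/2)² and B, D > 0. -/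

import Mathlib

open Real Complex Set

lemma aux_exp_neg_re (α : ℝ) : (Complex.exp (-(α:ℂ) * Complex.I)).re = Real.cos α := by
  have h : -(α:ℂ) = ((-α : ℝ) : ℂ) := by push_cast; ring
  rw [h, Complex.exp_ofReal_mul_I_re, Real.cos_neg]

lemma aux_exp_neg_re' (α : ℝ) : (Complex.exp (-((α:ℂ) * Complex.I))).re = Real.cos α := by
  rw [← neg_mul]; exact aux_exp_neg_re α

lemma aux_denom_re (B D S α₁ α₂ : ℝ) :
    ((B:ℂ) * Complex.exp (-(α₁:ℂ) * Complex.I) + (D:ℂ) * Complex.exp (-(α₂:ℂ) * Complex.I)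
      - (S:ℂ)).re = B * Real.cos α₁ + D * Real.cos α₂ - S := by
  simp [Complex.sub_re, Complex.add_re, Complex.mul_re, aux_exp_neg_re']

lemma aux_abs_exp (α : ℝ) : Norm.norm (Complex.exp ((α:ℂ) * Complex.I)) = 1 :=
  Complex.norm_exp_ofReal_mul_I α

lemma aux_abs_exp_neg (α : ℝ) : Norm.norm (Complex.exp (-(α:ℂ) * Complex.I)) = 1 := by
  have h : -(α:ℂ) = ((-α : ℝ) : ℂ) := by push_cast; ring
  rw [h]; exact Complex.norm_exp_ofReal_mul_I (-α)

lemma aux_num_le (A C α₁ α₂ : ℝ) (hA : 0 ≤ A) (hC : 0 ≤ C) :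
    Norm.norm ((A : ℂ) * Complex.exp (α₁ * Complex.I) +
        (C : ℂ) * Complex.exp (α₂ * Complex.I)) ≤ A + C := by
  calc Norm.norm ((A : ℂ) * Complex.exp (α₁ * Complex.I) +
        (C : ℂ) * Complex.exp (α₂ * Complex.I))
      ≤ Norm.norm ((A : ℂ) * Complex.exp (α₁ * Complex.I)) +
        Norm.norm ((C : ℂ) * Complex.exp (α₂ * Complex.I)) := norm_add_le _ _
    _ = A + C := by
        rw [norm_mul, norm_mul, aux_abs_exp, aux_abs_exp, Complex.norm_real,
          Complex.norm_real, Real.norm_eq_abs, Real.norm_eq_abs, _root_.abs_of_nonneg hA, _root_.abs_of_nonneg hC]; ring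

lemma aux_den_ge (B D S α₁ α₂ : ℝ) (hB : 0 ≤ B) (hD : 0 ≤ D) (hle : B + D ≤ S) :
    S - B - D ≤ Norm.norm ((B : ℂ) * Complex.exp (-(α₁ : ℂ) * Complex.I) +
        (D : ℂ) * Complex.exp (-(α₂ : ℂ) * Complex.I) - (S : ℂ)) := by
  set z : ℂ := (B : ℂ) * Complex.exp (-(α₁ : ℂ) * Complex.I) +
        (D : ℂ) * Complex.exp (-(α₂ : ℂ) * Complex.I) - (S : ℂ) with hz
  have hre : z.re = B * Real.cos α₁ + D * Real.cos α₂ - S := aux_denom_re B D S α₁ α₂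
  have h1 : B * Real.cos α₁ ≤ B := mul_le_of_le_one_right hB (Real.cos_le_one α₁)
  have h2 : D * Real.cos α₂ ≤ D := mul_le_of_le_one_right hD (Real.cos_le_one α₂)
  have : S - B - D ≤ -z.re := by rw [hre]; linarith
  calc S - B - D ≤ -z.re := this
    _ ≤ |z.re| := neg_le_abs _
    _ ≤ Norm.norm z := Complex.abs_re_le_norm z

lemma aux_den_eq (B D S α₁ α₂ : ℝ) (hB : 0 ≤ B) (hD : 0 ≤ D) (hle : B + D ≤ S)
    (heq : Norm.norm ((B : ℂ) * Complex.exp (-(α₁ : ℂ) * Complex.I) +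
        (D : ℂ) * Complex.exp (-(α₂ : ℂ) * Complex.I) - (S : ℂ)) = S - B - D) :
    (0 < B → Real.cos α₁ = 1) ∧ (0 < D → Real.cos α₂ = 1) := by
  set z : ℂ := (B : ℂ) * Complex.exp (-(α₁ : ℂ) * Complex.I) +
        (D : ℂ) * Complex.exp (-(α₂ : ℂ) * Complex.I) - (S : ℂ) with hz
  have hre : z.re = B * Real.cos α₁ + D * Real.cos α₂ - S := aux_denom_re B D S α₁ α₂
  have h1 : B * Real.cos α₁ ≤ B := mul_le_of_le_one_right hB (Real.cos_le_one α₁)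
  have h2 : D * Real.cos α₂ ≤ D := mul_le_of_le_one_right hD (Real.cos_le_one α₂)
  have hch : -z.re ≤ Norm.norm z := le_trans (neg_le_abs _) (Complex.abs_re_le_norm z)
  have key : B * Real.cos α₁ = B ∧ D * Real.cos α₂ = D := by
    constructor <;> nlinarith [hch, heq, hre]
  constructor
  · intro hBpos
    exact mul_left_cancel₀ (ne_of_gt hBpos) (by rw [key.1, mul_one])
  · intro hDpos
    exact mul_left_cancel₀ (ne_of_gt hDpos) (by rw [key.2, mul_one])


/-- The lexicographic Gauss-Seidel LFA amplification factor is at most 1, and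
strictly below 1 on the high-frequency range when B, D > 0. -/
theorem stmt_12 (A B C D : ℝ) (hA : 0 ≤ A) (hB : 0 ≤ B) (hC : 0 ≤ C) (hD : 0 ≤ D)
    (S : ℝ) (hS : S = A + B + C + D) (hSpos : 0 < S)
    (μ : ℝ → ℝ → ℝ)
    (hμ : ∀ α₁ α₂ : ℝ, μ α₁ α₂ =
      Norm.norm ((A : ℂ) * Complex.exp (α₁ * Complex.I) +
          (C : ℂ) * Complex.exp (α₂ * Complex.I)) /
      Norm.norm ((B : ℂ) * Complex.exp (-(α₁ : ℂ) * Complex.I) +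
          (D : ℂ) * Complex.exp (-(α₂ : ℂ) * Complex.I) - (S : ℂ))) :
    S - B - D = A + C ∧
    (∀ α₁ α₂ : ℝ,
      Norm.norm ((A : ℂ) * Complex.exp (α₁ * Complex.I) +
          (C : ℂ) * Complex.exp (α₂ * Complex.I)) ≤ A + C ∧
      A + C ≤ Norm.norm ((B : ℂ) * Complex.exp (-(α₁ : ℂ) * Complex.I) +
          (D : ℂ) * Complex.exp (-(α₂ : ℂ) * Complex.I) - (S : ℂ)) ∧
      (Norm.norm ((B : ℂ) * Complex.exp (-(α₁ : ℂ) * Complex.I) +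
          (D : ℂ) * Complex.exp (-(α₂ : ℂ) * Complex.I) - (S : ℂ)) = A + C →
        (0 < B → Real.cos α₁ = 1) ∧ (0 < D → Real.cos α₂ = 1)) ∧
      μ α₁ α₂ ≤ 1) ∧
    (0 < B → 0 < D →
      ∀ α : ℝ × ℝ, α ∈ (Set.Ico (-π) π ×ˢ Set.Ico (-π) π) \
          (Set.Ico (-(π/2)) (π/2) ×ˢ Set.Ico (-(π/2)) (π/2)) →
        μ α.1 α.2 < 1) := by
  have hACeq : S - B - D = A + C := by linarith
  have hle : B + D ≤ S := by linarith
  refine ⟨hACeq, ?_, ?_⟩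
  · intro α₁ α₂
    have hnum := aux_num_le A C α₁ α₂ hA hC
    have hden := aux_den_ge B D S α₁ α₂ hB hD hle
    rw [hACeq] at hden
    refine ⟨hnum, hden, ?_, ?_⟩
    · intro h
      exact aux_den_eq B D S α₁ α₂ hB hD hle (by rw [h, hACeq])
    · rw [hμ]
      exact div_le_one_of_le₀ (le_trans hnum hden) (norm_nonneg _)
  · intro hBpos hDpos α hα
    obtain ⟨hmem, hnot⟩ := hα
    obtain ⟨h1, h2⟩ := hmem
    have hnum := aux_num_le A C α.1 α.2 hA hC
    have hden := aux_den_ge B D S α.1 α.2 hB hD hle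
    rw [hACeq] at hden
    have hne : Norm.norm ((B : ℂ) * Complex.exp (-(α.1 : ℂ) * Complex.I) +
        (D : ℂ) * Complex.exp (-(α.2 : ℂ) * Complex.I) - (S : ℂ)) ≠ A + C := by
      intro h
      obtain ⟨hc1, hc2⟩ := aux_den_eq B D S α.1 α.2 hB hD hle (by rw [h, hACeq])
      have hpi := Real.pi_pos
      have ha1 : α.1 = 0 := by
        rw [← Real.cos_eq_one_iff_of_lt_of_lt (by cases h1 with | intro a b => linarith)
          (by cases h1 with | intro a b => linarith)]
        exact hc1 hBpos
      have ha2 : α.2 = 0 := by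
        rw [← Real.cos_eq_one_iff_of_lt_of_lt (by cases h2 with | intro a b => linarith)
          (by cases h2 with | intro a b => linarith)]
        exact hc2 hDpos
      exact hnot ⟨by rw [ha1]; constructor <;> linarith, by rw [ha2]; constructor <;> linarith⟩
    have hlt : A + C < Norm.norm ((B : ℂ) * Complex.exp (-(α.1 : ℂ) * Complex.I) +
        (D : ℂ) * Complex.exp (-(α.2 : ℂ) * Complex.I) - (S : ℂ)) :=
      lt_of_le_of_ne hden (Ne.symm hne)
    rw [hμ]
    exact (div_lt_one (lt_of_le_of_lt (by positivity) hlt)).mpr (lt_of_le_of_lt hnum hlt)
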